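/- arXiv:2305.09406 — 2 statements merged into one kernel-verified Lean document; each statement's English description precedes it below -/
import Mathlib

section
/- Let G be the decorated path obtained as the rooted product of the path P_n with rooted graphs G_1,…,G_n. Then, as an identity of real rational functions, α_1^G = α_1^{G_1} − 1/(α_2^{G_2} − 1/(α_3^{G_3} − ⋯ − 1/α_n^{G_n})); that is, φ^G/φ^{G∖1} equals the continued fraction whose k-th partial quotient is α_k^{G_k}. -/
/-!
Join the root of `G₁` by a bridge to the root of the decorated path `H` on `G₂, …, Gₙ`. The
characteristic matrix `x - A` of the result is a block matrix whose off-diagonal blocks are single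
entries `-1`, so the Schur complement gives `φ^G = φ^{G₁} φ^H - φ^{G₁∖1} φ^{H∖2}`, while deleting
vertex `1` disconnects the blocks, `φ^{G∖1} = φ^{G₁∖1} φ^H`. Dividing,
`α₁^G = α₁^{G₁} - 1 / α₂^H`, and induction on `n` unrolls this into the continued fraction.
-/

open Polynomial Matrix

noncomputable section

/-- The characteristic polynomial `φ` of a matrix. -/
def phi {V : Type} [Fintype V] [DecidableEq V] (M : Matrix V V ℝ) : Polynomial ℝ :=
  M.charpoly

/-- The characteristic polynomial of the matrix with row/column `v` deleted (`φ^{G∖v}`). -/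
def phiDel {V : Type} [Fintype V] [DecidableEq V] (M : Matrix V V ℝ) (v : V) : Polynomial ℝ :=
  (M.submatrix (fun u : {u : V // u ≠ v} => (u : V)) (fun u : {u : V // u ≠ v} => (u : V))).charpoly

/-- The rational function `α_v = φ^G / φ^{G∖v}`. -/
def alpha {V : Type} [Fintype V] [DecidableEq V] (M : Matrix V V ℝ) (v : V) : RatFunc ℝ :=
  algebraMap (Polynomial ℝ) (RatFunc ℝ) (phi M) / algebraMap (Polynomial ℝ) (RatFunc ℝ) (phiDel M v)

/-- `θ` is a pole of `α_v`. -/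
def IsPoleAt {V : Type} [Fintype V] [DecidableEq V] (M : Matrix V V ℝ) (v : V) (θ : ℝ) : Prop :=
  (phi M).rootMultiplicity θ < (phiDel M v).rootMultiplicity θ

/-- `α_v(θ) = 0`. -/
def IsZeroAt {V : Type} [Fintype V] [DecidableEq V] (M : Matrix V V ℝ) (v : V) (θ : ℝ) : Prop :=
  (phiDel M v).rootMultiplicity θ < (phi M).rootMultiplicity θ

/-- Evaluation of `α_v` at a real number (meaningful away from poles). -/
def evalAlpha {V : Type} [Fintype V] [DecidableEq V] (M : Matrix V V ℝ) (v : V) (θ : ℝ) : ℝ :=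
  (alpha M v).eval (RingHom.id ℝ) θ

/-- `θ` is an eigenvalue admitting an eigenvector with nonzero entry at `v`. -/
def InSupport {V : Type} [Fintype V] (M : Matrix V V ℝ) (v : V) (θ : ℝ) : Prop :=
  ∃ x : V → ℝ, M *ᵥ x = θ • x ∧ x v ≠ 0

/-- Strong cospectrality: for each eigenvalue either all eigenvectors agree at `i` and `j`,
or they are all opposite at `i` and `j`. -/
def StronglyCospectral {V : Type} [Fintype V] (M : Matrix V V ℝ) (i j : V) : Prop :=
  ∀ θ : ℝ, (∀ x : V → ℝ, M *ᵥ x = θ • x → x i = x j) ∨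
    (∀ x : V → ℝ, M *ᵥ x = θ • x → x i = - x j)

/-- `Φ⁺_{ij}`. -/
def PhiPlus {V : Type} [Fintype V] (M : Matrix V V ℝ) (i j : V) : Set ℝ :=
  {θ | InSupport M i θ ∧ ∀ x : V → ℝ, M *ᵥ x = θ • x → x i = x j}

/-- `Φ⁻_{ij}`. -/
def PhiMinus {V : Type} [Fintype V] (M : Matrix V V ℝ) (i j : V) : Set ℝ :=
  {θ | InSupport M i θ ∧ ∀ x : V → ℝ, M *ᵥ x = θ • x → x i = - x j}

open Classical in
/-- The real adjacency matrix of a simple graph. -/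
def adjMat {V : Type} (G : SimpleGraph V) : Matrix V V ℝ :=
  fun a b => if G.Adj a b then 1 else 0

open Classical in
/-- The complex adjacency matrix of a simple graph. -/
def adjMatC {V : Type} (G : SimpleGraph V) : Matrix V V ℂ :=
  fun a b => if G.Adj a b then 1 else 0

/-- The decorated path: the rooted product of the path `P_n` with rooted graphs `G_1, …, G_n`. -/
def decoratedPath {n : ℕ} {V : Fin n → Type} (G : ∀ i, SimpleGraph (V i)) (r : ∀ i, V i) :
    SimpleGraph ((i : Fin n) × V i) :=
  SimpleGraph.fromRel (fun a b =>
    (∃ (i : Fin n) (u v : V i), a = ⟨i, u⟩ ∧ b = ⟨i, v⟩ ∧ (G i).Adj u v) ∨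
    ((a.1 : ℕ) + 1 = (b.1 : ℕ) ∧ a.2 = r a.1 ∧ b.2 = r b.1))

/-- Continued fraction `a₁ - 1/(a₂ - 1/(⋯ - 1/aₙ))`. -/
def contFrac : List (RatFunc ℝ) → RatFunc ℝ
  | [] => 0
  | x :: xs => x - 1 / contFrac xs

/-- Perfect state transfer between distinct vertices `i` and `j` at time `t`. -/
def PST {V : Type} [Fintype V] [DecidableEq V] (G : SimpleGraph V) (i j : V) (t : ℝ) : Prop :=
  i ≠ j ∧ ∃ lam : ℂ, ‖lam‖ = 1 ∧
    (NormedSpace.exp ((Complex.I * (t : ℂ)) • adjMatC G)) *ᵥ (Pi.single i 1 : V → ℂ) =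
      lam • (Pi.single j 1 : V → ℂ)

/-- The graph obtained from disjoint graphs `G₁`, `G₂` by adding an edge joining their roots. -/
def joinRoots {V₁ V₂ : Type} (G₁ : SimpleGraph V₁) (G₂ : SimpleGraph V₂) (r₁ : V₁) (r₂ : V₂) :
    SimpleGraph (V₁ ⊕ V₂) :=
  SimpleGraph.fromRel (fun a b =>
    (∃ x y, a = Sum.inl x ∧ b = Sum.inl y ∧ G₁.Adj x y) ∨
    (∃ x y, a = Sum.inr x ∧ b = Sum.inr y ∧ G₂.Adj x y) ∨
    (a = Sum.inl r₁ ∧ b = Sum.inr r₂))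

namespace Matrix

variable {n R : Type*} [Fintype n] [DecidableEq n]

def delete (M : Matrix n n R) (v : n) : Matrix {u // u ≠ v} {u // u ≠ v} R :=
  M.submatrix (↑) (↑)

variable [CommRing R]

theorem adjugate_apply_self (M : Matrix n n R) (v : n) :
    M.adjugate v v = (M.delete v).det := by
  let e := Equiv.sumCompl (· ≠ v)
  have hv (u : {u // ¬u ≠ v}) : (u : n) = v := not_not.mp u.2
  have : Unique {u // ¬u ≠ v} := ⟨⟨⟨v, not_not.mpr rfl⟩⟩, fun u => Subtype.ext (hv u)⟩
  have hblocks : (M.updateRow v (Pi.single v 1)).submatrix e e =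
      fromBlocks (M.delete v) (of fun u _ => M u v) 0 1 := by
    ext (i | i) (j | j)
    · simp [e, delete, updateRow_apply, i.2]
    · simp [e, updateRow_apply, i.2, hv]
    · simp [e, updateRow_apply, hv, j.2]
    · simp [e, updateRow_apply, hv, Subsingleton.elim i j]
  rw [adjugate_apply, ← det_submatrix_equiv_self e, hblocks, det_fromBlocks_zero₂₁, det_one,
    mul_one]

theorem det_sub_single_self (M : Matrix n n R) (v : n) (s : R) :
    (M - single v v s).det = M.det - s * (M.delete v).det := by
  have hrow : M - single v v s = M.updateRow v (M v + (-s) • Pi.single v 1) := by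
    ext i j
    by_cases hi : i = v
    · subst hi; by_cases hj : i = j <;> simp [hj, sub_eq_add_neg]
    · simp [hi, Ne.symm hi]
  rw [hrow, det_updateRow_add, det_updateRow_smul, updateRow_eq_self, ← adjugate_apply,
    adjugate_apply_self]
  ring

theorem charmatrix_delete (M : Matrix n n R) (v : n) :
    charmatrix (M.delete v) = (charmatrix M).delete v := by
  ext i j
  by_cases h : i = j
  · subst h; simp [delete]
  · simp [delete, h, Subtype.val_injective.ne h]

theorem inv_apply_self {K : Type*} [Field K] (M : Matrix n n K) (v : n) :
    M⁻¹ v v = (M.delete v).det / M.det := by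
  rw [inv_def, smul_apply, Ring.inverse_eq_inv', adjugate_apply_self, smul_eq_mul, div_eq_inv_mul]

theorem det_fromBlocks_single_single_of_field {m K : Type*} [Fintype m] [DecidableEq m] [Field K]
    (P : Matrix n n K) (S : Matrix m m K) (hP : P.det ≠ 0) (i : n) (k : m) (b c : K) :
    (fromBlocks P (single i k b) (single k i c) S).det =
      P.det * S.det - b * c * (P.delete i).det * (S.delete k).det := by
  have := P.invertibleOfIsUnitDet (isUnit_iff_ne_zero.mpr hP)
  rw [det_fromBlocks₁₁, invOf_eq_nonsing_inv, single_mul_mul_single, det_sub_single_self,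
    inv_apply_self]
  field_simp

theorem det_fromBlocks_single_single {m : Type*} [Fintype m] [DecidableEq m] [IsDomain R]
    (P : Matrix n n R) (S : Matrix m m R) (hP : P.det ≠ 0) (i : n) (k : m) (b c : R) :
    (fromBlocks P (single i k b) (single k i c) S).det =
      P.det * S.det - b * c * (P.delete i).det * (S.delete k).det := by
  set f := algebraMap R (FractionRing R)
  have hf : Function.Injective f := IsFractionRing.injective R (FractionRing R)
  have hdelete (M : Matrix n n R) (v : n) : (M.delete v).map f = (M.map f).delete v := rfl
  apply hf
  simp only [map_sub, map_mul, RingHom.map_det, RingHom.mapMatrix_apply, hdelete, fromBlocks_map,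
    map_single]
  refine det_fromBlocks_single_single_of_field _ _ ?_ _ _ _ _
  rwa [← RingHom.mapMatrix_apply, ← RingHom.map_det, map_ne_zero_iff _ hf]

end Matrix

section charpoly

variable {V V₁ V₂ : Type} [Fintype V] [DecidableEq V] [Fintype V₁] [DecidableEq V₁]
  [Fintype V₂] [DecidableEq V₂]

theorem phiDel_eq_charpoly_delete (M : Matrix V V ℝ) (v : V) : phiDel M v = (M.delete v).charpoly :=
  rfl

theorem phi_submatrix_equiv {W : Type} [Fintype W] [DecidableEq W] (M : Matrix V V ℝ) (e : W ≃ V) :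
    phi (M.submatrix e e) = phi M :=
  charpoly_reindex e.symm M

theorem phiDel_submatrix_equiv {W : Type} [Fintype W] [DecidableEq W] (M : Matrix V V ℝ)
    (e : W ≃ V) (w : W) : phiDel (M.submatrix e e) w = phiDel M (e w) := by
  let f : {u // u ≠ w} ≃ {x // x ≠ e w} := e.subtypeEquiv fun _ => e.injective.ne_iff.symm
  exact phi_submatrix_equiv (M.delete (e w)) f

theorem alpha_submatrix_equiv {W : Type} [Fintype W] [DecidableEq W] (M : Matrix V V ℝ)
    (e : W ≃ V) (w : W) : alpha (M.submatrix e e) w = alpha M (e w) := by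
  rw [alpha, alpha, phi_submatrix_equiv, phiDel_submatrix_equiv]

def joinMat (A : Matrix V₁ V₁ ℝ) (B : Matrix V₂ V₂ ℝ) (r₁ : V₁) (r₂ : V₂) :
    Matrix (V₁ ⊕ V₂) (V₁ ⊕ V₂) ℝ :=
  fromBlocks A (single r₁ r₂ 1) (single r₂ r₁ 1) B

theorem phi_joinMat (A : Matrix V₁ V₁ ℝ) (B : Matrix V₂ V₂ ℝ) (r₁ : V₁) (r₂ : V₂) :
    phi (joinMat A B r₁ r₂) = phi A * phi B - phiDel A r₁ * phiDel B r₂ := by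
  have hsingle {m n : Type} [DecidableEq m] [DecidableEq n] (i : m) (j : n) :
      -(single i j (1 : ℝ)).map C = single i j (-1 : ℝ[X]) := by
    ext a b
    simp [single_apply, apply_ite]
  rw [phi, joinMat, charpoly, charmatrix_fromBlocks, hsingle, hsingle,
    det_fromBlocks_single_single _ _ (charpoly_monic A).ne_zero]
  simp only [phi, phiDel_eq_charpoly_delete, charpoly, charmatrix_delete]
  ring

theorem phiDel_joinMat_inl (A : Matrix V₁ V₁ ℝ) (B : Matrix V₂ V₂ ℝ) (r₁ : V₁) (r₂ : V₂) :
    phiDel (joinMat A B r₁ r₂) (Sum.inl r₁) = phiDel A r₁ * phi B := by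
  let e : {x : V₁ ⊕ V₂ // x ≠ Sum.inl r₁} ≃ {a // a ≠ r₁} ⊕ V₂ :=
    Equiv.subtypeSum.trans <| Equiv.sumCongr
      (Equiv.subtypeEquivRight fun _ => Sum.inl_injective.ne_iff)
      (Equiv.subtypeUnivEquiv fun _ => Sum.inr_ne_inl)
  have hblocks : (joinMat A B r₁ r₂).delete (Sum.inl r₁) =
      (fromBlocks (A.delete r₁) 0 0 B).submatrix e e := by
    ext ⟨a | b, ha⟩ ⟨c | d, hc⟩ <;>
      simp [e, joinMat, delete, single_apply, Equiv.subtypeSum] <;> grind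
  rw [phiDel_eq_charpoly_delete, hblocks, ← phi, phi_submatrix_equiv, phi,
    charpoly_fromBlocks_zero₁₂]
  rfl

theorem alpha_joinMat_inl (A : Matrix V₁ V₁ ℝ) (B : Matrix V₂ V₂ ℝ) (r₁ : V₁) (r₂ : V₂) :
    alpha (joinMat A B r₁ r₂) (Sum.inl r₁) = alpha A r₁ - 1 / alpha B r₂ := by
  have hne {W : Type} [Fintype W] [DecidableEq W] (M : Matrix W W ℝ) :
      algebraMap ℝ[X] (RatFunc ℝ) M.charpoly ≠ 0 :=
    RatFunc.algebraMap_ne_zero (charpoly_monic M).ne_zero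
  have hB := hne B
  have hA₁ := hne (A.delete r₁)
  have hB₂ := hne (B.delete r₂)
  simp only [alpha, phi_joinMat, phiDel_joinMat_inl, map_sub, map_mul]
  simp only [phi, phiDel_eq_charpoly_delete]
  field_simp

end charpoly

section graph

variable {V W V₁ V₂ : Type}

theorem adjMat_eq_submatrix_of_iso {G : SimpleGraph V} {H : SimpleGraph W} (e : G ≃g H) :
    adjMat G = (adjMat H).submatrix e e := by
  classical
  ext a b
  exact if_congr e.map_adj_iff.symm rfl rfl

theorem alpha_adjMat_of_iso [Fintype V] [DecidableEq V] [Fintype W] [DecidableEq W]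
    {G : SimpleGraph V} {H : SimpleGraph W} (e : G ≃g H) (v : V) :
    alpha (adjMat G) v = alpha (adjMat H) (e v) := by
  rw [adjMat_eq_submatrix_of_iso e]
  exact alpha_submatrix_equiv _ e.toEquiv v

section joinRoots

variable (G₁ : SimpleGraph V₁) (G₂ : SimpleGraph V₂) (r₁ : V₁) (r₂ : V₂)

@[simp]
theorem joinRoots_adj_inl_inl (a b : V₁) :
    (joinRoots G₁ G₂ r₁ r₂).Adj (.inl a) (.inl b) ↔ G₁.Adj a b := by
  simp [joinRoots, SimpleGraph.adj_comm]
  exact G₁.ne_of_adj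

@[simp]
theorem joinRoots_adj_inr_inr (a b : V₂) :
    (joinRoots G₁ G₂ r₁ r₂).Adj (.inr a) (.inr b) ↔ G₂.Adj a b := by
  simp [joinRoots, SimpleGraph.adj_comm]
  exact G₂.ne_of_adj

@[simp]
theorem joinRoots_adj_inl_inr (a : V₁) (b : V₂) :
    (joinRoots G₁ G₂ r₁ r₂).Adj (.inl a) (.inr b) ↔ a = r₁ ∧ b = r₂ := by
  simp [joinRoots]

@[simp]
theorem joinRoots_adj_inr_inl (a : V₂) (b : V₁) :
    (joinRoots G₁ G₂ r₁ r₂).Adj (.inr a) (.inl b) ↔ b = r₁ ∧ a = r₂ := by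
  simp [joinRoots]

theorem adjMat_joinRoots [DecidableEq V₁] [DecidableEq V₂] :
    adjMat (joinRoots G₁ G₂ r₁ r₂) = joinMat (adjMat G₁) (adjMat G₂) r₁ r₂ := by
  ext (a | a) (b | b)
  · simp only [adjMat, joinMat, fromBlocks_apply₁₁]
    rw [joinRoots_adj_inl_inl]
  · simp only [adjMat, joinMat, fromBlocks_apply₁₂, single_apply]
    rw [joinRoots_adj_inl_inr]
    simp [eq_comm]
  · simp only [adjMat, joinMat, fromBlocks_apply₂₁, single_apply]
    rw [joinRoots_adj_inr_inl]
    simp [eq_comm, and_comm]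
  · simp only [adjMat, joinMat, fromBlocks_apply₂₂]
    rw [joinRoots_adj_inr_inr]

end joinRoots

end graph

section decoratedPath

variable {n : ℕ} {V : Fin n → Type} (G : ∀ i, SimpleGraph (V i)) (r : ∀ i, V i)

theorem decoratedPath_adj_mk_mk_self (i : Fin n) (u v : V i) :
    (decoratedPath G r).Adj ⟨i, u⟩ ⟨i, v⟩ ↔ (G i).Adj u v := by
  simp [decoratedPath, and_assoc, exists_and_left, exists_eq_left', SimpleGraph.adj_comm _ v u]
  exact (G i).ne_of_adj

theorem decoratedPath_adj_mk_mk_of_ne {i j : Fin n} (hij : i ≠ j) (u : V i) (v : V j) :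
    (decoratedPath G r).Adj ⟨i, u⟩ ⟨j, v⟩ ↔
      ((i : ℕ) + 1 = j ∨ (j : ℕ) + 1 = i) ∧ u = r i ∧ v = r j := by
  simp [decoratedPath, hij, and_assoc, exists_and_left, exists_eq_left', hij.symm]
  tauto

end decoratedPath

section decoratedPathIso

variable {n : ℕ}

def sigmaFinSuccEquiv (V : Fin (n + 1) → Type) :
    ((i : Fin (n + 1)) × V i) ≃ V 0 ⊕ ((j : Fin n) × V j.succ) where
  toFun p := Fin.cases (motive := fun i => V i → V 0 ⊕ ((j : Fin n) × V j.succ))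
    Sum.inl (fun j x => Sum.inr ⟨j, x⟩) p.1 p.2
  invFun := Sum.elim (fun x => ⟨0, x⟩) (fun q => ⟨q.1.succ, q.2⟩)
  left_inv := by
    rintro ⟨i, x⟩
    induction i using Fin.cases <;> simp
  right_inv := by rintro (x | ⟨j, x⟩) <;> simp

@[simp]
theorem sigmaFinSuccEquiv_mk_zero (V : Fin (n + 1) → Type) (x : V 0) :
    sigmaFinSuccEquiv V ⟨0, x⟩ = .inl x :=
  rfl

@[simp]
theorem sigmaFinSuccEquiv_mk_succ (V : Fin (n + 1) → Type) (j : Fin n) (x : V j.succ) :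
    sigmaFinSuccEquiv V ⟨j.succ, x⟩ = .inr ⟨j, x⟩ :=
  rfl

def decoratedPathSuccIso {V : Fin (n + 2) → Type} (G : ∀ i, SimpleGraph (V i)) (r : ∀ i, V i) :
    decoratedPath G r ≃g joinRoots (G 0) (decoratedPath (fun j => G j.succ) (fun j => r j.succ))
      (r 0) ⟨0, r (Fin.succ 0)⟩ where
  -- `Fin.succ 0` rather than `1`: the root must lie in `V (Fin.succ 0)` syntactically, or
  -- `Sigma.mk.inj_iff` cannot be used below.
  toEquiv := sigmaFinSuccEquiv V
  map_rel_iff' := by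
    rintro ⟨i, u⟩ ⟨j, v⟩
    induction i using Fin.cases <;> induction j using Fin.cases <;>
      simp only [sigmaFinSuccEquiv_mk_zero, sigmaFinSuccEquiv_mk_succ]
    · simp [decoratedPath_adj_mk_mk_self]
    case zero.succ b =>
      rw [joinRoots_adj_inl_inr, decoratedPath_adj_mk_mk_of_ne _ _ (Fin.succ_ne_zero b).symm,
        Sigma.mk.inj_iff]
      obtain rfl | hb := eq_or_ne b 0
      · simp only [heq_iff_eq, true_and]
        simp
      · simp [hb]
    case succ.zero a =>
      rw [joinRoots_adj_inr_inl, decoratedPath_adj_mk_mk_of_ne _ _ (Fin.succ_ne_zero a),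
        Sigma.mk.inj_iff]
      obtain rfl | ha := eq_or_ne a 0
      · simp only [heq_iff_eq, true_and]
        simp only [Fin.val_succ, Fin.val_zero]
        tauto
      · simp [ha]
    case succ.succ a b =>
      obtain rfl | hab := eq_or_ne a b
      · simp [decoratedPath_adj_mk_mk_self]
      · simp [decoratedPath_adj_mk_mk_of_ne, hab]

def decoratedPathOneIso {V : Fin 1 → Type} (G : ∀ i, SimpleGraph (V i)) (r : ∀ i, V i) :
    decoratedPath G r ≃g G 0 where
  toEquiv := Equiv.uniqueSigma V
  map_rel_iff' := by
    rintro ⟨i, u⟩ ⟨j, v⟩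
    obtain rfl := Subsingleton.elim i 0
    obtain rfl := Subsingleton.elim j 0
    exact (decoratedPath_adj_mk_mk_self G r 0 u v).symm

end decoratedPathIso

theorem alpha_decoratedPath_eq_contFrac {n : ℕ} {V : Fin (n + 1) → Type}
    [∀ i, Fintype (V i)] [∀ i, DecidableEq (V i)] (G : ∀ i, SimpleGraph (V i)) (r : ∀ i, V i) :
    alpha (adjMat (decoratedPath G r)) ⟨0, r 0⟩ =
      contFrac (List.ofFn fun i => alpha (adjMat (G i)) (r i)) := by
  induction n with
  | zero =>
    have hroot : decoratedPathOneIso G r ⟨0, r 0⟩ = r 0 := rfl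
    -- `contFrac [a] = a - 1 / 0 = a`
    rw [alpha_adjMat_of_iso (decoratedPathOneIso G r), hroot, List.ofFn_succ, List.ofFn_zero,
      contFrac, contFrac, div_zero, sub_zero]
  | succ n ih =>
    have hroot : decoratedPathSuccIso G r ⟨0, r 0⟩ = .inl (r 0) := rfl
    rw [alpha_adjMat_of_iso (decoratedPathSuccIso G r), hroot, adjMat_joinRoots, alpha_joinMat_inl,
      ih, List.ofFn_succ (n := n + 1), contFrac]

/-- the continued-fraction expansion of `α₁^G` for a decorated path. -/
theorem statement_0 {n : ℕ} (hn : 0 < n) {V : Fin n → Type}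
    [∀ i, Fintype (V i)] [∀ i, DecidableEq (V i)]
    (G : ∀ i, SimpleGraph (V i)) (r : ∀ i, V i) :
    alpha (adjMat (decoratedPath G r)) ⟨⟨0, hn⟩, r ⟨0, hn⟩⟩ =
      contFrac (List.ofFn (fun i : Fin n => alpha (adjMat (G i)) (r i))) := by
  obtain ⟨m, rfl⟩ := Nat.exists_eq_succ_of_ne_zero hn.ne'
  exact alpha_decoratedPath_eq_contFrac G r

end
end

section
/- Let G be a finite simple graph and let i ≠ j be strongly cospectral vertices of G such that every eigenvalue of A(G) in the eigenvalue support of i is an integer. Then it is impossible that every eigenvalue in Φ^+_{ij}(G) is even while every eigenvalue in Φ^−_{ij}(G) is odd, and it is likewise impossible that every eigenvalue in Φ^+_{ij}(G) is odd while every eigenvalue in Φ^−_{ij}(G) is even. -/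
open Polynomial Matrix

noncomputable section

/-!
Put `w± = e_i ± e_j`. By strong cospectrality every eigenvalue `θ` whose eigenspace is not
orthogonal to `w₊` (resp. `w₋`) lies in `Φ⁺` (resp. `Φ⁻`), so the spectral decomposition
gives `∏ (A - θ) w± = 0` with `θ` running over part of `Φ±`. When these eigenvalues are
integers the relation holds over `ℤ`, hence modulo 2, where `w₊ ≡ w₋` and the products
become `(A - c±)^k`. If `c₊ ≠ c₋` these two polynomials are coprime, forcing
`w₊ ≡ 0 (mod 2)`, whereas its entry at `i` is `1`.
-/

open Finset

namespace Matrix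

variable {n : Type*} [Fintype n] [DecidableEq n]

theorem aeval_mulVec_of_mulVec_eq_smul {R : Type*} [CommRing R] {M : Matrix n n R}
    {x : n → R} {θ : R} (hx : M *ᵥ x = θ • x) (p : R[X]) :
    aeval M p *ᵥ x = p.eval θ • x := by
  have h := Module.End.aeval_apply_of_mem_apply_eq_smul (f := toLinAlgEquiv' M) (p := p)
    (by rwa [toLinAlgEquiv'_apply])
  rwa [← AlgEquiv.coe_toAlgHom, aeval_algHom_apply, AlgEquiv.coe_toAlgHom,
    toLinAlgEquiv'_apply] at h

theorem mulVec_eq_zero_of_isCoprime {R : Type*} [CommRing R] {M : Matrix n n R} {p q : R[X]}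
    (hpq : IsCoprime p q) {u : n → R} (hp : aeval M p *ᵥ u = 0) (hq : aeval M q *ᵥ u = 0) :
    u = 0 := by
  obtain ⟨a, b, hab⟩ := hpq
  calc u = aeval M (a * p + b * q) *ᵥ u := by rw [hab, map_one, one_mulVec]
    _ = 0 := by rw [map_add, map_mul, map_mul, add_mulVec, ← mulVec_mulVec, ← mulVec_mulVec,
      hp, hq, mulVec_zero, mulVec_zero, add_zero]

theorem aeval_map_intCast_mulVec {S : Type*} [Ring S] (N : Matrix n n ℤ) (p : ℤ[X])
    (w : n → ℤ) :
    aeval (N.map (Int.cast : ℤ → S)) p *ᵥ (fun v => (w v : S)) =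
      fun v => ((aeval N p *ᵥ w) v : S) := by
  have h : aeval (N.map (Int.cast : ℤ → S)) p = (aeval N p).map Int.cast :=
    aeval_algHom_apply ((Int.castRingHom S).mapMatrix (m := n)).toIntAlgHom N p
  ext v
  rw [h]
  exact (RingHom.map_mulVec (Int.castRingHom S) _ w v).symm

theorem IsHermitian.exists_prod_X_sub_C_aeval_mulVec_eq_zero {M : Matrix n n ℝ}
    (hM : M.IsHermitian) (w : n → ℝ) :
    ∃ s : Finset ℝ, (∀ θ ∈ s, ∃ x, M *ᵥ x = θ • x ∧ w ⬝ᵥ x ≠ 0) ∧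
      aeval M (∏ θ ∈ s, (X - C θ)) *ᵥ w = 0 := by
  set u : n → n → ℝ := fun k => hM.eigenvectorBasis k
  have hw : ∑ k, (w ⬝ᵥ u k) • u k = w := by
    have := congrArg WithLp.ofLp (hM.eigenvectorBasis.sum_repr' (WithLp.toLp 2 w))
    simpa [EuclideanSpace.inner_eq_star_dotProduct] using this
  set s := (univ.filter fun k => w ⬝ᵥ u k ≠ 0).image hM.eigenvalues with hs
  refine ⟨s, ?_, ?_⟩
  · simp only [hs, mem_image, mem_filter, mem_univ, true_and]
    rintro _ ⟨k, hk, rfl⟩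
    exact ⟨u k, hM.mulVec_eigenvectorBasis k, hk⟩
  · rw [← hw, mulVec_sum]
    refine sum_eq_zero fun k _ => ?_
    rw [mulVec_smul, aeval_mulVec_of_mulVec_eq_smul (hM.mulVec_eigenvectorBasis k), smul_smul]
    by_cases hk : w ⬝ᵥ u k = 0
    · rw [hk, zero_mul, zero_smul]
    · rw [eval_prod, prod_eq_zero (mem_image_of_mem _ (by simpa using hk)) (by simp),
        mul_zero, zero_smul]

theorem exists_aeval_pow_X_sub_C_mulVec_eq_zero {S : Type*} [CommRing S] (N : Matrix n n ℤ)
    (w : n → ℤ) {c : S} {s : Finset ℝ}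
    (hs : ↑s ⊆ (Int.cast : ℤ → ℝ) '' {z | (z : S) = c})
    (h : aeval (N.map (Int.cast : ℤ → ℝ)) (∏ θ ∈ s, (X - C θ)) *ᵥ (fun v => (w v : ℝ)) = 0) :
    ∃ m : ℕ,
      aeval (N.map (Int.cast : ℤ → S)) ((X - C c) ^ m) *ᵥ (fun v => (w v : S)) = 0 := by
  obtain ⟨t, ht, rfl⟩ := Finset.subset_set_image_iff.1 hs
  set P : ℤ[X] := ∏ z ∈ t, (X - C z)
  have hPℝ : ∏ θ ∈ t.image Int.cast, (X - C θ) = P.map (algebraMap ℤ ℝ) := by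
    rw [prod_image Int.cast_injective.injOn, Polynomial.map_prod]
    simp
  have hPS : (X - C c) ^ t.card = P.map (algebraMap ℤ S) := by
    rw [Polynomial.map_prod, ← prod_const]
    refine prod_congr rfl fun z hz => ?_
    rw [Polynomial.map_sub, map_X, map_C, algebraMap_int_eq, eq_intCast, (ht hz : (z : S) = c)]
  have hP : aeval N P *ᵥ w = 0 := by
    rw [hPℝ, aeval_map_algebraMap, aeval_map_intCast_mulVec] at h
    ext v
    simpa using congrFun h v
  refine ⟨t.card, ?_⟩
  rw [hPS, aeval_map_algebraMap, aeval_map_intCast_mulVec, hP]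
  ext
  simp

end Matrix

section StrongCospectrality

variable {V : Type} [Fintype V] {M : Matrix V V ℝ} {i j : V} {θ : ℝ} {x : V → ℝ}

theorem mem_phiPlus_of_add_ne_zero (hsc : StronglyCospectral M i j) (hx : M *ᵥ x = θ • x)
    (hne : x i + x j ≠ 0) : θ ∈ PhiPlus M i j := by
  rcases hsc θ with hplus | hminus
  · refine ⟨⟨x, hx, fun hxi => hne ?_⟩, hplus⟩
    linarith [hplus x hx]
  · exact absurd (by rw [hminus x hx, neg_add_cancel]) hne

theorem mem_phiMinus_of_sub_ne_zero (hsc : StronglyCospectral M i j) (hx : M *ᵥ x = θ • x)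
    (hne : x i - x j ≠ 0) : θ ∈ PhiMinus M i j := by
  rcases hsc θ with hplus | hminus
  · exact absurd (by rw [hplus x hx, sub_self]) hne
  · refine ⟨⟨x, hx, fun hxi => hne ?_⟩, hminus⟩
    linarith [hminus x hx]

end StrongCospectrality

theorem adjMat_eq_adjMatrix {V : Type} (G : SimpleGraph V) [DecidableRel G.Adj] :
    adjMat G = G.adjMatrix ℝ := by
  ext a b
  by_cases h : G.Adj a b <;> simp [adjMat, h]

theorem SimpleGraph.adjMatrix_map_intCast {V : Type} (G : SimpleGraph V) [DecidableRel G.Adj]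
    {R : Type*} [AddGroupWithOne R] :
    (G.adjMatrix ℤ).map (Int.cast : ℤ → R) = G.adjMatrix R := by
  ext a b
  by_cases h : G.Adj a b <;> simp [h]

theorem not_phiPlus_phiMinus_residue_separated {V : Type} [Fintype V] (G : SimpleGraph V)
    {i j : V} (hij : i ≠ j) (hsc : StronglyCospectral (adjMat G) i j) {cPlus cMinus : ZMod 2}
    (hc : cPlus ≠ cMinus)
    (hPlus : PhiPlus (adjMat G) i j ⊆ (Int.cast : ℤ → ℝ) '' {z | (z : ZMod 2) = cPlus})
    (hMinus : PhiMinus (adjMat G) i j ⊆ (Int.cast : ℤ → ℝ) '' {z | (z : ZMod 2) = cMinus}) :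
    False := by
  classical
  have hherm : (adjMat G).IsHermitian := adjMat_eq_adjMatrix G ▸ G.isHermitian_adjMatrix ℝ
  set wPlus : V → ℤ := Pi.single i 1 + Pi.single j 1
  set wMinus : V → ℤ := Pi.single i 1 - Pi.single j 1
  have hdotPlus (x : V → ℝ) : (fun v => (wPlus v : ℝ)) ⬝ᵥ x = x i + x j := by
    simp [wPlus, Pi.single_apply, dotProduct, add_mul, sum_add_distrib]
  have hdotMinus (x : V → ℝ) : (fun v => (wMinus v : ℝ)) ⬝ᵥ x = x i - x j := by
    simp [wMinus, Pi.single_apply, dotProduct, sub_mul, sum_sub_distrib]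
  obtain ⟨sPlus, hsPlus, hannPlus⟩ :=
    hherm.exists_prod_X_sub_C_aeval_mulVec_eq_zero fun v => (wPlus v : ℝ)
  obtain ⟨sMinus, hsMinus, hannMinus⟩ :=
    hherm.exists_prod_X_sub_C_aeval_mulVec_eq_zero fun v => (wMinus v : ℝ)
  have hsPlus_sub : ↑sPlus ⊆ PhiPlus (adjMat G) i j := fun θ hθ => by
    obtain ⟨x, hx, hne⟩ := hsPlus θ hθ
    exact mem_phiPlus_of_add_ne_zero hsc hx (hdotPlus x ▸ hne)
  have hsMinus_sub : ↑sMinus ⊆ PhiMinus (adjMat G) i j := fun θ hθ => by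
    obtain ⟨x, hx, hne⟩ := hsMinus θ hθ
    exact mem_phiMinus_of_sub_ne_zero hsc hx (hdotMinus x ▸ hne)
  rw [adjMat_eq_adjMatrix, ← G.adjMatrix_map_intCast] at hannPlus hannMinus
  obtain ⟨k, hk⟩ :=
    exists_aeval_pow_X_sub_C_mulVec_eq_zero _ _ (hsPlus_sub.trans hPlus) hannPlus
  obtain ⟨m, hm⟩ :=
    exists_aeval_pow_X_sub_C_mulVec_eq_zero _ _ (hsMinus_sub.trans hMinus) hannMinus
  have hmod : (fun v => (wMinus v : ZMod 2)) = fun v => (wPlus v : ZMod 2) := by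
    ext v
    simp [wPlus, wMinus, CharTwo.sub_eq_add]
  rw [hmod] at hm
  have hcop : IsCoprime ((X - C cPlus) ^ k) ((X - C cMinus) ^ m) :=
    (isCoprime_X_sub_C_of_isUnit_sub (sub_ne_zero.2 hc).isUnit).pow
  have := congrFun (mulVec_eq_zero_of_isCoprime hcop hk hm) i
  simp [wPlus, hij] at this

theorem statement_11_general {V : Type} [Fintype V] (G : SimpleGraph V) (i j : V) (hij : i ≠ j)
    (hsc : StronglyCospectral (adjMat G) i j) :
    ¬ ((∀ θ ∈ PhiPlus (adjMat G) i j, ∃ z : ℤ, θ = 2 * (z : ℝ)) ∧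
        (∀ θ ∈ PhiMinus (adjMat G) i j, ∃ z : ℤ, θ = 2 * (z : ℝ) + 1)) ∧
    ¬ ((∀ θ ∈ PhiPlus (adjMat G) i j, ∃ z : ℤ, θ = 2 * (z : ℝ) + 1) ∧
        (∀ θ ∈ PhiMinus (adjMat G) i j, ∃ z : ℤ, θ = 2 * (z : ℝ))) := by
  have h2 : (2 : ZMod 2) = 0 := rfl
  have hEven (z : ℤ) : 2 * (z : ℝ) ∈ (Int.cast : ℤ → ℝ) '' {k | (k : ZMod 2) = 0} :=
    ⟨2 * z, by simp [h2], by push_cast; ring⟩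
  have hOdd (z : ℤ) : 2 * (z : ℝ) + 1 ∈ (Int.cast : ℤ → ℝ) '' {k | (k : ZMod 2) = 1} :=
    ⟨2 * z + 1, by simp [h2], by push_cast; ring⟩
  constructor
  · rintro ⟨hPlus, hMinus⟩
    refine not_phiPlus_phiMinus_residue_separated G hij hsc zero_ne_one ?_ ?_
    · intro θ hθ; obtain ⟨z, rfl⟩ := hPlus θ hθ; exact hEven z
    · intro θ hθ; obtain ⟨z, rfl⟩ := hMinus θ hθ; exact hOdd z
  · rintro ⟨hPlus, hMinus⟩
    refine not_phiPlus_phiMinus_residue_separated G hij hsc one_ne_zero ?_ ?_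
    · intro θ hθ; obtain ⟨z, rfl⟩ := hPlus θ hθ; exact hOdd z
    · intro θ hθ; obtain ⟨z, rfl⟩ := hMinus θ hθ; exact hEven z

/-- parity separation of `Φ⁺` and `Φ⁻` is impossible. -/
theorem statement_11 {V : Type} [Fintype V] (G : SimpleGraph V) (i j : V) (hij : i ≠ j)
    (hsc : StronglyCospectral (adjMat G) i j)
    (hint : ∀ θ : ℝ, InSupport (adjMat G) i θ → ∃ z : ℤ, θ = (z : ℝ)) :
    ¬ ((∀ θ ∈ PhiPlus (adjMat G) i j, ∃ z : ℤ, θ = 2 * (z : ℝ)) ∧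
        (∀ θ ∈ PhiMinus (adjMat G) i j, ∃ z : ℤ, θ = 2 * (z : ℝ) + 1)) ∧
    ¬ ((∀ θ ∈ PhiPlus (adjMat G) i j, ∃ z : ℤ, θ = 2 * (z : ℝ) + 1) ∧
        (∀ θ ∈ PhiMinus (adjMat G) i j, ∃ z : ℤ, θ = 2 * (z : ℝ))) :=
  statement_11_general G i j hij hsc

end
end
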